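/- arXiv:1706.04375 — 3 statements merged into one kernel-verified Lean document; each statement's English description precedes it below -/
import Mathlib

section
/- Let p>0, μ>0 and λ≥0 with c := μ - (p^p/(p+1)^{p+1})λ > 0. If y:[0,T)→[0,1) is C^1 with y(0) ≥ 0 and satisfies y'(t) ≥ μ(1-y(t))^{-p} - λ y(t) for all t ∈ (0,T), then y'(t) ≥ c(1-y(t))^{-p} for all t ∈ (0,T). -/
/-!
The damping term is absorbed pointwise: by weighted AM-GM for `u` and `(1 - u) / p` with weights
`1 : p`, the function `u (1 - u)^p` is at most `p^p / (p + 1)^(p + 1)` on `[0, 1]` (equality at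
`u = 1 / (p + 1)`), so `λ y ≤ (p^p / (p + 1)^(p + 1)) λ (1 - y)^(-p)`.
-/

open Real

theorem mul_one_sub_rpow_le {p u : ℝ} (hp : 0 < p) (hu0 : 0 ≤ u) (hu1 : u ≤ 1) :
    u * (1 - u) ^ p ≤ p ^ p / (p + 1) ^ (p + 1) := by
  have hp1 : 0 < p + 1 := by linarith
  have hv : 0 ≤ (1 - u) / p := div_nonneg (by linarith) hp.le
  have amgm : u ^ (1 / (p + 1)) * ((1 - u) / p) ^ (p / (p + 1)) ≤ 1 / (p + 1) := by
    convert geom_mean_le_arith_mean2_weighted (by positivity) (by positivity) hu0 hv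
      (by field_simp; ring : 1 / (p + 1) + p / (p + 1) = 1) using 1
    field_simp
    ring
  have hpow : (u ^ (1 / (p + 1)) * ((1 - u) / p) ^ (p / (p + 1))) ^ (p + 1)
      = u * (1 - u) ^ p / p ^ p := by
    rw [mul_rpow (by positivity) (by positivity), ← rpow_mul hu0, ← rpow_mul hv,
      one_div_mul_cancel hp1.ne', div_mul_cancel₀ _ hp1.ne', rpow_one,
      div_rpow (by linarith) hp.le, mul_div_assoc]
  have hbound := rpow_le_rpow (by positivity) amgm hp1.le
  rw [hpow, div_rpow zero_le_one hp1.le, one_rpow, div_le_div_iff₀ (by positivity) (by positivity)]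
    at hbound
  rw [le_div_iff₀ (by positivity)]
  linarith

theorem le_mul_one_sub_rpow_neg {p u : ℝ} (hp : 0 < p) (hu0 : 0 ≤ u) (hu1 : u < 1) :
    u ≤ p ^ p / (p + 1) ^ (p + 1) * (1 - u) ^ (-p) := by
  have hv : 0 < (1 - u) ^ p := rpow_pos_of_pos (by linarith) p
  rw [rpow_neg (by linarith), ← div_eq_mul_inv, le_div_iff₀ hv]
  exact mul_one_sub_rpow_le hp hu0 hu1.le

theorem diff_ineq_improvement_general (p μ lam T : ℝ) (hp : 0 < p) (hlam : 0 ≤ lam)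
    (c : ℝ) (hc : c = μ - (p ^ p / (p + 1) ^ (p + 1)) * lam)
    (y y' : ℝ → ℝ)
    (hrange : ∀ t ∈ Set.Ico (0 : ℝ) T, 0 ≤ y t ∧ y t < 1)
    (hineq : ∀ t ∈ Set.Ioo (0 : ℝ) T, y' t ≥ μ * (1 - y t) ^ (-p) - lam * y t) :
    ∀ t ∈ Set.Ioo (0 : ℝ) T, y' t ≥ c * (1 - y t) ^ (-p) := by
  intro t ht
  obtain ⟨hy0, hy1⟩ := hrange t (Set.Ioo_subset_Ico_self ht)
  have hdamp := mul_le_mul_of_nonneg_left (le_mul_one_sub_rpow_neg hp hy0 hy1) hlam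
  have hy' := hineq t ht
  rw [hc]
  linarith

theorem diff_ineq_improvement (p μ lam T : ℝ) (hp : 0 < p) (hμ : 0 < μ) (hlam : 0 ≤ lam)
    (c : ℝ) (hc : c = μ - (p ^ p / (p + 1) ^ (p + 1)) * lam) (hcpos : 0 < c)
    (y y' : ℝ → ℝ)
    (hrange : ∀ t ∈ Set.Ico (0 : ℝ) T, 0 ≤ y t ∧ y t < 1)
    (hy0 : 0 ≤ y 0)
    (hderiv : ∀ t ∈ Set.Ioo (0 : ℝ) T, HasDerivAt y (y' t) t)
    (hineq : ∀ t ∈ Set.Ioo (0 : ℝ) T, y' t ≥ μ * (1 - y t) ^ (-p) - lam * y t) :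
    ∀ t ∈ Set.Ioo (0 : ℝ) T, y' t ≥ c * (1 - y t) ^ (-p) :=
  diff_ineq_improvement_general p μ lam T hp hlam c hc y y' hrange hineq
end

section
/- Let p>0, h(u) = (1-u)^{-p}+1 on [0,1), let U ⊆ ℝⁿ be open, φ : U → ℝ positive, smooth and harmonic, and a = φ^{p+1}. Then for every x ∈ U and u ∈ [0,1): h(u)h''(u)·a(x)·Δa(x) - (h'(u))²·|∇a(x)|² ≥ 0. -/
/-- Laplacian of a real-valued function on Euclidean space, as sum of
second partial derivatives in the coordinate directions. -/
noncomputable def lap {n : ℕ} (f : EuclideanSpace ℝ (Fin n) → ℝ)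
    (x : EuclideanSpace ℝ (Fin n)) : ℝ :=
  ∑ i : Fin n,
    fderiv ℝ (fun y => fderiv ℝ f y (EuclideanSpace.single i 1)) x
      (EuclideanSpace.single i 1)

open InnerProductSpace Topology

theorem key_sign_condition {n : ℕ} (p : ℝ) (hp : 0 < p)
    (U : Set (EuclideanSpace ℝ (Fin n))) (hU : IsOpen U)
    (φ : EuclideanSpace ℝ (Fin n) → ℝ)
    (hφ : ContDiffOn ℝ (⊤ : ℕ∞) φ U)
    (hpos : ∀ x ∈ U, 0 < φ x)
    (hharm : ∀ x ∈ U, lap φ x = 0) :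
    ∀ x ∈ U, ∀ u ∈ Set.Ico (0 : ℝ) 1,
      ((1 - u) ^ (-p) + 1) * (p * (p + 1) * (1 - u) ^ (-p - 2)) *
          (φ x ^ (p + 1)) * lap (fun y => φ y ^ (p + 1)) x -
        (p * (1 - u) ^ (-p - 1)) ^ 2 *
          ‖gradient (fun y => φ y ^ (p + 1)) x‖ ^ 2 ≥ 0 := by
  intro x hx u hu
  obtain ⟨hu0, hu1⟩ := hu
  have ht : 0 < 1 - u := by linarith
  set c : ℝ := p + 1 with hc
  have hA : 0 < φ x := hpos x hx
  have hmem : U ∈ 𝓝 x := hU.mem_nhds hx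
  have hφx : ContDiffAt ℝ (⊤ : ℕ∞) φ x := hφ.contDiffAt hmem
  have hdiff : ∀ y ∈ U, DifferentiableAt ℝ φ y := fun y hy =>
    (hφ.contDiffAt (hU.mem_nhds hy)).differentiableAt (by simp)
  have hgder : ∀ y ∈ U, HasFDerivAt (fun z => φ z ^ c)
      ((c * φ y ^ (c - 1)) • fderiv ℝ φ y) y := fun y hy =>
    ((hdiff y hy).hasFDerivAt).rpow_const (Or.inl (hpos y hy).ne')
  -- gradient formula
  have hgradg : gradient (fun z => φ z ^ c) x = (c * φ x ^ (c-1)) • gradient φ x := by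
    unfold gradient
    rw [(hgder x hx).fderiv, map_smul]
  have hdual : ∀ v, fderiv ℝ φ x v = ⟪gradient φ x, v⟫_ℝ := by
    intro v
    rw [gradient, ← InnerProductSpace.toDual_apply_apply, LinearIsometryEquiv.apply_symm_apply]
  have hsum : ∑ i, (fderiv ℝ φ x (EuclideanSpace.single i 1))^2 = ‖gradient φ x‖^2 := by
    rw [← real_inner_self_eq_norm_sq, PiLp.inner_apply]
    refine Finset.sum_congr rfl fun i _ => ?_
    rw [hdual]
    simp [EuclideanSpace.inner_single_right, sq]
    rw [hdual, EuclideanSpace.inner_single_right]; simp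
  -- Laplacian formula
  have hlapg_i : ∀ i : Fin n,
      fderiv ℝ (fun y => fderiv ℝ (fun z => φ z ^ c) y (EuclideanSpace.single i 1)) x
        (EuclideanSpace.single i 1)
      = c * (c-1) * φ x ^ (c-1-1) * (fderiv ℝ φ x (EuclideanSpace.single i 1))^2
        + c * φ x ^ (c-1) *
          fderiv ℝ (fun y => fderiv ℝ φ y (EuclideanSpace.single i 1)) x
            (EuclideanSpace.single i 1) := by
    intro i
    set v := EuclideanSpace.single (𝕜 := ℝ) i (1:ℝ) with hv
    have hEq : (fun y => fderiv ℝ (fun z => φ z ^ c) y v) =ᶠ[𝓝 x]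
        (fun y => (c * φ y ^ (c-1)) * fderiv ℝ φ y v) := by
      filter_upwards [hmem] with y hy
      rw [(hgder y hy).fderiv]
      simp
    rw [hEq.fderiv_eq]
    have hA' : HasFDerivAt (fun y => c * φ y ^ (c-1))
        (c • (((c-1) * φ x ^ (c-1-1)) • fderiv ℝ φ x)) x :=
      (((hdiff x hx).hasFDerivAt).rpow_const (Or.inl hA.ne')).const_mul c
    have hBd : DifferentiableAt ℝ (fun y => fderiv ℝ φ y v) x := by
      have h1 : ContDiffAt ℝ (⊤ : ℕ∞) (fderiv ℝ φ) x := hφx.fderiv_right (by simp)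
      exact (((ContinuousLinearMap.apply ℝ ℝ v).contDiff.contDiffAt).comp x
        h1).differentiableAt (by simp)
    rw [fderiv_fun_mul hA'.differentiableAt hBd, hA'.fderiv]
    simp only [ContinuousLinearMap.add_apply, ContinuousLinearMap.smul_apply, smul_eq_mul]
    ring
  have hlapg : lap (fun y => φ y ^ c) x = (p+1)*p*(φ x ^ (p-1)) * ‖gradient φ x‖^2 := by
    have h0 : lap (fun y => φ y ^ c) x
        = c*(c-1)* φ x ^(c-1-1) * (∑ i, (fderiv ℝ φ x (EuclideanSpace.single i 1))^2)
          + c * φ x ^(c-1) * lap φ x := by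
      unfold lap
      rw [Finset.sum_congr rfl (fun i _ => hlapg_i i), Finset.sum_add_distrib,
        ← Finset.mul_sum, ← Finset.mul_sum]
    rw [h0, hharm x hx, hsum]
    have h1 : c - 1 - 1 = p - 1 := by rw [hc]; ring
    rw [h1]; ring
  have hnrm : ‖gradient (fun y => φ y ^ c) x‖^2 = ((p+1) * φ x ^ p)^2 * ‖gradient φ x‖^2 := by
    rw [hgradg, norm_smul, mul_pow, Real.norm_eq_abs, sq_abs]
    have h1 : c - 1 = p := by rw [hc]; ring
    rw [h1]
  rw [hc] at hlapg hnrm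
  rw [hlapg, hnrm]
  set A := φ x
  set G := ‖gradient φ x‖
  set t := 1 - u
  have e1 : t^(-p) * t^(-p-2) = t^(-p-1) * t^(-p-1) := by
    rw [← Real.rpow_add ht, ← Real.rpow_add ht]; ring_nf
  have e2 : A^(p+1) * A^(p-1) = A^p * A^p := by
    rw [← Real.rpow_add hA, ← Real.rpow_add hA]; ring_nf
  have key : (t ^ (-p) + 1) * (p * (p + 1) * t ^ (-p - 2)) * (A ^ (p + 1)) *
        ((p+1)*p*(A ^ (p-1)) * G^2) -
      (p * t ^ (-p - 1)) ^ 2 * (((p+1) * A ^ p)^2 * G^2)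
      = p^2*(p+1)^2*G^2*(A^p*A^p)*t^(-p-2) := by
    linear_combination (p^2*(p+1)^2*G^2*(A^p*A^p)) * e1 +
      ((t^(-p)+1)*p^2*(p+1)^2*t^(-p-2)*G^2) * e2
  rw [ge_iff_le, key]
  positivity
end

section
/- Let p>0, γ>0, η>0, and suppose u : [0,ρ) → [0,1) is differentiable with u'(r) ≤ -η r (1-u(r))^{-γ} for all r ∈ [0,ρ). Then (1-u(r))^{γ+1} ≥ ((γ+1)/2)·η·r² for all r ∈ [0,ρ). -/
/-!
Put `v = 1 - u > 0`. The differential inequality says `v' ≥ η r v ^ (-γ)`, so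
`(v ^ (γ + 1))' = (γ + 1) v ^ γ v' ≥ (γ + 1) η r = ((γ + 1) / 2 · η r ²)'`.
Integrating from `0` and dropping `v(0) ^ (γ + 1) ≥ 0` gives the bound.
-/

open Set

theorem sub_le_sub_of_hasDerivAt_le {f g f' g' : ℝ → ℝ} {a b x : ℝ}
    (hf : ∀ y ∈ Ico a b, HasDerivAt f (f' y) y) (hg : ∀ y ∈ Ico a b, HasDerivAt g (g' y) y)
    (hle : ∀ y ∈ Ioo a b, g' y ≤ f' y) (hx : x ∈ Ico a b) :
    g x - g a ≤ f x - f a := by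
  have hfg : ∀ y ∈ Ico a b, HasDerivAt (f - g) (f' y - g' y) y :=
    fun y hy => (hf y hy).sub (hg y hy)
  have hmono : MonotoneOn (f - g) (Ico a b) := by
    refine monotoneOn_of_hasDerivWithinAt_nonneg (f' := f' - g') (convex_Ico a b)
      (fun y hy => (hfg y hy).continuousAt.continuousWithinAt) (fun y hy => ?_) (fun y hy => ?_)
    · exact (hfg y (interior_subset hy)).hasDerivWithinAt
    · rw [interior_Ico] at hy
      exact sub_nonneg.2 (hle y hy)
  have hstep := hmono (left_mem_Ico.2 (hx.1.trans_lt hx.2)) hx hx.1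
  simp only [Pi.sub_apply] at hstep
  linarith

theorem le_rpow_mul_of_mul_rpow_neg_le {a v d γ : ℝ} (hv : 0 < v) (h : a * v ^ (-γ) ≤ d) :
    a ≤ v ^ γ * d :=
  calc a = v ^ γ * (a * v ^ (-γ)) := by
        rw [mul_left_comm, ← Real.rpow_add hv, add_neg_cancel, Real.rpow_zero, mul_one]
    _ ≤ v ^ γ * d := mul_le_mul_of_nonneg_left h (Real.rpow_nonneg hv.le γ)

theorem single_point_profile_bound_general (γ η ρ : ℝ) (hγ : 0 < γ)
    (u u' : ℝ → ℝ)
    (hrange : ∀ r ∈ Set.Ico (0 : ℝ) ρ, 0 ≤ u r ∧ u r < 1)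
    (hderiv : ∀ r ∈ Set.Ico (0 : ℝ) ρ, HasDerivAt u (u' r) r)
    (hineq : ∀ r ∈ Set.Ico (0 : ℝ) ρ, u' r ≤ -η * r * (1 - u r) ^ (-γ)) :
    ∀ r ∈ Set.Ico (0 : ℝ) ρ, (1 - u r) ^ (γ + 1) ≥ ((γ + 1) / 2) * η * r ^ 2 := by
  intro r hr
  have hpos : ∀ x ∈ Ico (0 : ℝ) ρ, 0 < 1 - u x := fun x hx => sub_pos.2 (hrange x hx).2
  have hprofile : ∀ x ∈ Ico (0 : ℝ) ρ, HasDerivAt (fun y => (1 - u y) ^ (γ + 1))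
      (-u' x * (γ + 1) * (1 - u x) ^ (γ + 1 - 1)) x := fun x hx =>
    ((hderiv x hx).const_sub 1).rpow_const (Or.inl (hpos x hx).ne')
  have hquadratic : ∀ x ∈ Ico (0 : ℝ) ρ, HasDerivAt (fun y : ℝ => (γ + 1) / 2 * η * y ^ 2)
      ((γ + 1) / 2 * η * (↑2 * x ^ (2 - 1))) x := fun x _ =>
    (hasDerivAt_pow 2 x).const_mul _
  have hslope : ∀ x ∈ Ioo (0 : ℝ) ρ, (γ + 1) / 2 * η * (↑2 * x ^ (2 - 1)) ≤
      -u' x * (γ + 1) * (1 - u x) ^ (γ + 1 - 1) := by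
    intro x hx
    have hx' := Ioo_subset_Ico_self hx
    have hkey := le_rpow_mul_of_mul_rpow_neg_le (hpos x hx') (d := -u' x)
      (by linarith [hineq x hx'] : η * x * (1 - u x) ^ (-γ) ≤ -u' x)
    calc (γ + 1) / 2 * η * (↑2 * x ^ (2 - 1)) = (γ + 1) * (η * x) := by ring
      _ ≤ (γ + 1) * ((1 - u x) ^ γ * -u' x) := by gcongr
      _ = -u' x * (γ + 1) * (1 - u x) ^ (γ + 1 - 1) := by rw [add_sub_cancel_right]; ring
  have hgain := sub_le_sub_of_hasDerivAt_le hprofile hquadratic hslope hr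
  have hstart := Real.rpow_nonneg (hpos 0 (left_mem_Ico.2 (hr.1.trans_lt hr.2))).le (γ + 1)
  simp only [ne_eq, OfNat.ofNat_ne_zero, not_false_eq_true, zero_pow, mul_zero, sub_zero] at hgain
  linarith

theorem single_point_profile_bound (p γ η ρ : ℝ) (hp : 0 < p) (hγ : 0 < γ)
    (hη : 0 < η) (hρ : 0 < ρ)
    (u u' : ℝ → ℝ)
    (hrange : ∀ r ∈ Set.Ico (0 : ℝ) ρ, 0 ≤ u r ∧ u r < 1)
    (hderiv : ∀ r ∈ Set.Ico (0 : ℝ) ρ, HasDerivAt u (u' r) r)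
    (hineq : ∀ r ∈ Set.Ico (0 : ℝ) ρ, u' r ≤ -η * r * (1 - u r) ^ (-γ)) :
    ∀ r ∈ Set.Ico (0 : ℝ) ρ, (1 - u r) ^ (γ + 1) ≥ ((γ + 1) / 2) * η * r ^ 2 :=
  single_point_profile_bound_general γ η ρ hγ u u' hrange hderiv hineq
end
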